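/- arXiv:math/0608140 — 6 statements merged into one kernel-verified Lean document; each statement's English description precedes it below -/
import Mathlib

section
/- For every dimension d ≥ 1 and every integer k ≥ 0, the sequence τ_k^(d)(n) = β_k(T^(d)[n])/n^d, defined for n ≥ 3, converges as n → ∞. -/
open Filter Topology

/-- The `d`-dimensional kings graph on `Fin (n 0) × ⋯ × Fin (n (d-1))`:
distinct vertices are adjacent iff their coordinates differ by at most 1. -/
def kingsGraph (d : ℕ) (n : Fin d → ℕ) :
    SimpleGraph (∀ i : Fin d, Fin (n i)) where
  Adj u v := u ≠ v ∧ ∀ i, |((v i : ℤ)) - (u i : ℤ)| ≤ 1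
  symm := by
    constructor
    rintro u v ⟨h1, h2⟩
    exact ⟨h1.symm, fun i => by rw [abs_sub_comm]; exact h2 i⟩
  loopless := by constructor; intro v h; exact h.1 rfl

/-- The `d`-dimensional toroidal kings graph on `ZMod (n 0) × ⋯ × ZMod (n (d-1))`:
distinct vertices are adjacent iff each coordinate difference is `-1`, `0` or `1`. -/
def torusGraph (d : ℕ) (n : Fin d → ℕ) :
    SimpleGraph (∀ i : Fin d, ZMod (n i)) where
  Adj u v := u ≠ v ∧ ∀ i, v i - u i = -1 ∨ v i - u i = 0 ∨ v i - u i = 1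
  symm := by
    constructor
    rintro u v ⟨h1, h2⟩
    refine ⟨h1.symm, fun i => ?_⟩
    rcases h2 i with h | h | h
    · right; right; rw [show u i - v i = -(v i - u i) by ring, h]; norm_num
    · right; left; rw [show u i - v i = -(v i - u i) by ring, h]; norm_num
    · left; rw [show u i - v i = -(v i - u i) by ring, h]
  loopless := by constructor; intro v h; exact h.1 rfl

/-- A set `S` of vertices is `k`-dependent if every vertex of `S`
has at most `k` neighbors in `S`. -/
def IsKDependent {V : Type*} (G : SimpleGraph V) (k : ℕ) (S : Set V) : Prop :=
  ∀ v ∈ S, (S ∩ G.neighborSet v).ncard ≤ k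

/-- `betaK G k` is the maximum cardinality of a `k`-dependent set in `G`. -/
noncomputable def betaK {V : Type*} (G : SimpleGraph V) (k : ℕ) : ℕ :=
  sSup {m | ∃ S : Set V, IsKDependent G k S ∧ S.ncard = m}

/-- A set `S` of vertices is half-dependent if every vertex `v ∈ S`
has at most `|N(v)|/2` neighbors in `S`. -/
def IsHalfDependent {V : Type*} (G : SimpleGraph V) (S : Set V) : Prop :=
  ∀ v ∈ S, 2 * (S ∩ G.neighborSet v).ncard ≤ (G.neighborSet v).ncard

/-- `halfNum G` is the maximum cardinality of a half-dependent set in `G`. -/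
noncomputable def halfNum {V : Type*} (G : SimpleGraph V) : ℕ :=
  sSup {m | ∃ S : Set V, IsHalfDependent G S ∧ S.ncard = m}

/-- A graph is vertex-transitive if any vertex can be mapped to any other
by a graph automorphism. -/
def IsVertexTransitive {V : Type*} (G : SimpleGraph V) : Prop :=
  ∀ u v : V, ∃ f : G ≃g G, f u = v

/-!
Write `c n = β_k(K[n]) / (n + 1)^d`, where `K[n]` is the kings graph on the box `[n]^d`.
Reading coordinates modulo `n + 1` embeds `K[n]` as an induced subgraph of the torus
`T[n + 1]` that misses only `(n + 1)^d - n^d` vertices, so `τ(n + 1)` is squeezed between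
`c n` and `c n + 1 - (n / (n + 1))^d`. Conversely, `⌊(N + 1) / (n + 1)⌋^d` copies of `K[n]`,
separated by empty layers, fit into `K[N]` with no edges between copies, giving
`c N ≥ c n * (1 - n / (N + 1))^d`; this forces `c N → sup c`, and hence `τ N → sup c`.
-/

open Set Function

section KDependent

variable {V W ι : Type*} {G : SimpleGraph V} {H : SimpleGraph W} {k : ℕ}

lemma bddAbove_ncard_isKDependent [Finite V] (G : SimpleGraph V) (k : ℕ) :
    BddAbove {m | ∃ S : Set V, IsKDependent G k S ∧ S.ncard = m} :=
  ⟨Nat.card V, by rintro _ ⟨S, -, rfl⟩; exact ncard_le_card S⟩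

lemma exists_isKDependent_ncard_eq_betaK [Finite V] (G : SimpleGraph V) (k : ℕ) :
    ∃ S : Set V, IsKDependent G k S ∧ S.ncard = betaK G k :=
  Nat.sSup_mem (s := {m | ∃ S : Set V, IsKDependent G k S ∧ S.ncard = m})
    ⟨0, ∅, fun _ h => h.elim, ncard_empty V⟩ (bddAbove_ncard_isKDependent G k)

lemma IsKDependent.ncard_le_betaK [Finite V] {S : Set V} (hS : IsKDependent G k S) :
    S.ncard ≤ betaK G k :=
  le_csSup (bddAbove_ncard_isKDependent G k) ⟨S, hS, rfl⟩

lemma betaK_le_card [Finite V] (G : SimpleGraph V) (k : ℕ) : betaK G k ≤ Nat.card V := by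
  obtain ⟨S, -, hS⟩ := exists_isKDependent_ncard_eq_betaK G k
  exact hS ▸ ncard_le_card S

lemma IsKDependent.preimage [Finite W] {T : Set W} (hT : IsKDependent H k T) (f : G →g H)
    (hf : Injective f) : IsKDependent G k (f ⁻¹' T) := by
  intro v hv
  calc (f ⁻¹' T ∩ G.neighborSet v).ncard
      = (f '' (f ⁻¹' T ∩ G.neighborSet v)).ncard := (ncard_image_of_injective _ hf).symm
    _ ≤ (T ∩ H.neighborSet (f v)).ncard := by
        refine ncard_le_ncard ?_ (toFinite _)
        rintro _ ⟨u, ⟨hu, huv⟩, rfl⟩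
        exact ⟨hu, f.map_adj huv⟩
    _ ≤ k := hT (f v) hv

lemma IsKDependent.image_univ_prod [Finite W] {S : Set V} (hS : IsKDependent G k S)
    {Φ : ι × V → W} (hΦ : Injective Φ)
    (hadj : ∀ j j' x x', H.Adj (Φ (j, x)) (Φ (j', x')) → j' = j ∧ G.Adj x x') :
    IsKDependent H k (Φ '' (univ ×ˢ S)) := by
  rintro _ ⟨⟨j, x⟩, ⟨-, hx⟩, rfl⟩
  calc (Φ '' (univ ×ˢ S) ∩ H.neighborSet (Φ (j, x))).ncard
      ≤ ((fun y => Φ (j, y)) '' (S ∩ G.neighborSet x)).ncard := by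
        refine ncard_le_ncard ?_ (toFinite _)
        rintro _ ⟨⟨⟨j', x'⟩, ⟨-, hx'⟩, rfl⟩, hjx⟩
        obtain ⟨rfl, hxx'⟩ := hadj j j' x x' hjx
        exact ⟨x', ⟨hx', hxx'⟩, rfl⟩
    _ = (S ∩ G.neighborSet x).ncard :=
        ncard_image_of_injective _ fun _ _ h => (Prod.ext_iff.mp (hΦ h)).2
    _ ≤ k := hS x hx

lemma card_mul_betaK_le_betaK [Finite V] [Finite W] {Φ : ι × V → W} (hΦ : Injective Φ)
    (hadj : ∀ j j' x x', H.Adj (Φ (j, x)) (Φ (j', x')) → j' = j ∧ G.Adj x x') :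
    Nat.card ι * betaK G k ≤ betaK H k := by
  obtain ⟨S, hS, hcard⟩ := exists_isKDependent_ncard_eq_betaK G k
  calc Nat.card ι * betaK G k = (Φ '' (univ ×ˢ S)).ncard := by
        rw [ncard_image_of_injective _ hΦ, ncard_prod, ncard_univ, hcard]
    _ ≤ betaK H k := (hS.image_univ_prod hΦ hadj).ncard_le_betaK

lemma betaK_le_betaK_of_embedding [Finite W] (e : G ↪g H) : betaK G k ≤ betaK H k := by
  have := Finite.of_injective e e.injective
  simpa using card_mul_betaK_le_betaK (ι := Unit) (Φ := e ∘ Prod.snd)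
    (fun a b h => Prod.ext rfl (e.injective h)) fun _ _ _ _ h => ⟨rfl, e.map_adj_iff.mp h⟩

lemma betaK_le_betaK_add_of_embedding [Finite W] (e : G ↪g H) :
    betaK H k ≤ betaK G k + (Nat.card W - Nat.card V) := by
  have := Finite.of_injective e e.injective
  obtain ⟨S, hS, hcard⟩ := exists_isKDependent_ncard_eq_betaK H k
  calc betaK H k = (S ∩ range e).ncard + (S \ range e).ncard := by
        rw [ncard_inter_add_ncard_sdiff_eq_ncard S _ (toFinite _), hcard]
    _ ≤ (e ⁻¹' S).ncard + (range e)ᶜ.ncard := by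
        rw [← image_preimage_eq_inter_range, ncard_image_of_injective _ e.injective]
        exact add_le_add_right (ncard_le_ncard fun _ hx => hx.2) _
    _ ≤ betaK G k + (Nat.card W - Nat.card V) := by
        rw [ncard_compl, ncard_range_of_injective e.injective]
        gcongr
        exact (hS.preimage e.toHom e.injective).ncard_le_betaK

end KDependent

lemma natCast_sub_natCast_eq_intCast_iff_of_lt {n a b : ℕ} (ha : a < n) (hb : b < n) {c : ℤ}
    (hc : |c| ≤ 1) : (b : ZMod (n + 1)) - a = c ↔ (b : ℤ) - a = c := by
  rw [show (b : ZMod (n + 1)) - a = ((b - a : ℤ) : ZMod (n + 1)) by push_cast; rfl,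
    ZMod.intCast_eq_intCast_iff_dvd_sub]
  refine ⟨fun h => ?_, fun h => by rw [h, sub_self]; exact dvd_zero _⟩
  have := Int.eq_zero_of_abs_lt_dvd h (by rw [abs_le] at hc; rw [abs_lt]; push_cast; omega)
  omega

lemma zmod_natCast_sub_eq_neg_one_or_zero_or_one_iff {n a b : ℕ} (ha : a < n) (hb : b < n) :
    ((b : ZMod (n + 1)) - a = -1 ∨ (b : ZMod (n + 1)) - a = 0 ∨ (b : ZMod (n + 1)) - a = 1) ↔
      |(b : ℤ) - a| ≤ 1 := by
  have key := fun (c : ℤ) (hc : |c| ≤ 1) => natCast_sub_natCast_eq_intCast_iff_of_lt ha hb hc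
  have hneg := key (-1) (by norm_num)
  have hzero := key 0 (by norm_num)
  have hone := key 1 (by norm_num)
  push_cast at hneg hzero hone
  rw [hneg, hzero, hone, abs_le]
  omega

def finEmbeddingZModSucc (n : ℕ) : Fin n ↪ ZMod (n + 1) where
  toFun a := (a : ℕ)
  inj' a b h := Fin.ext <| by
    have := (natCast_sub_natCast_eq_intCast_iff_of_lt b.isLt a.isLt (c := 0) (by simp)).mp
      (by simpa [sub_eq_zero] using h)
    omega

def kingsGraphEmbeddingTorusGraph (d : ℕ) (n : Fin d → ℕ) :
    kingsGraph d n ↪g torusGraph d (fun i => n i + 1) where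
  toEmbedding := Embedding.piCongrRight fun i => finEmbeddingZModSucc (n i)
  map_rel_iff' {x y} := and_congr (Embedding.piCongrRight _).injective.ne_iff
    (forall_congr' fun i =>
      zmod_natCast_sub_eq_neg_one_or_zero_or_one_iff (x i).isLt (y i).isLt)

lemma eq_of_abs_mul_add_sub_mul_add_le_one {m j j' x x' : ℕ} (hx : x < m) (hx' : x' < m)
    (h : |((j' * (m + 1) + x' : ℕ) : ℤ) - (j * (m + 1) + x : ℕ)| ≤ 1) : j' = j := by
  rw [abs_le] at h
  push_cast at h
  rcases lt_trichotomy j' j with hj | hj | hj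
  · have : ((j' : ℤ) + 1) * (m + 1) ≤ j * (m + 1) := by
      exact_mod_cast Nat.mul_le_mul_right _ hj
    linarith
  · exact hj
  · have : ((j : ℤ) + 1) * (m + 1) ≤ j' * (m + 1) := by
      exact_mod_cast Nat.mul_le_mul_right _ hj
    linarith

theorem prod_mul_betaK_kingsGraph_le_betaK {d : ℕ} {n N q : Fin d → ℕ}
    (hq : ∀ i, q i * (n i + 1) ≤ N i + 1) (k : ℕ) :
    (∏ i, q i) * betaK (kingsGraph d n) k ≤ betaK (kingsGraph d N) k := by
  let Φ : (∀ i, Fin (q i)) × (∀ i, Fin (n i)) → ∀ i, Fin (N i) := fun p i =>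
    ⟨p.1 i * (n i + 1) + p.2 i, by nlinarith [hq i, (p.1 i).isLt, (p.2 i).isLt]⟩
  have hblock : ∀ p p' i, |(Φ p' i : ℤ) - Φ p i| ≤ 1 →
      p'.1 i = p.1 i ∧ (Φ p' i : ℤ) - Φ p i = (p'.2 i : ℤ) - p.2 i := fun p p' i h => by
    have := eq_of_abs_mul_add_sub_mul_add_le_one (p.2 i).isLt (p'.2 i).isLt h
    refine ⟨Fin.ext this, ?_⟩
    simp only [Φ, this]
    push_cast
    ring
  have hΦ : Injective Φ := fun p p' h => by
    have hb := fun i => hblock p' p i (by rw [h, sub_self, abs_zero]; exact zero_le_one)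
    refine Prod.ext (funext fun i => (hb i).1) (funext fun i => Fin.ext ?_)
    have := (hb i).2
    rw [h, sub_self] at this
    omega
  have := card_mul_betaK_le_betaK (G := kingsGraph d n) (H := kingsGraph d N) (k := k) hΦ
    fun j j' x x' ⟨hne, hadj⟩ => by
      have hb := fun i => hblock (j, x) (j', x') i (hadj i)
      obtain rfl : j' = j := funext fun i => (hb i).1
      exact ⟨rfl, fun hx => hne (by rw [hx]), fun i => (hb i).2 ▸ hadj i⟩
  simpa [Nat.card_pi] using this

theorem tendsto_iSup_of_forall_mul_le {c : ℕ → ℝ} {g : ℕ → ℕ → ℝ} (hc : BddAbove (range c))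
    (hg : ∀ n, Tendsto (g n) atTop (𝓝 1)) (h : ∀ n N, n ≤ N → c n * g n N ≤ c N) :
    Tendsto c atTop (𝓝 (⨆ n, c n)) := by
  refine tendsto_order.mpr
    ⟨fun a ha => ?_, fun b hb => .of_forall fun N => (le_ciSup hc N).trans_lt hb⟩
  obtain ⟨n, hn⟩ := exists_lt_of_lt_ciSup ha
  have hcg : Tendsto (fun N => c n * g n N) atTop (𝓝 (c n)) := by
    simpa using (hg n).const_mul (c n)
  filter_upwards [hcg.eventually (lt_mem_nhds hn), eventually_ge_atTop n] with N hN hnN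
  exact hN.trans_le (h n N hnN)

lemma tendsto_one_sub_div_add_one_pow (a : ℝ) (d : ℕ) :
    Tendsto (fun N : ℕ => (1 - a / ((N : ℝ) + 1)) ^ d) atTop (𝓝 1) := by
  have := (tendsto_one_div_add_atTop_nhds_zero_nat (𝕜 := ℝ)).const_mul a
  simpa [div_eq_mul_inv] using ((tendsto_const_nhds (x := (1 : ℝ))).sub this).pow d

noncomputable def paddedKingsDensity (d k n : ℕ) : ℝ :=
  betaK (kingsGraph d fun _ => n) k / ((n : ℝ) + 1) ^ d

section paddedKingsDensity

variable {d k : ℕ}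

lemma paddedKingsDensity_le_one (n : ℕ) : paddedKingsDensity d k n ≤ 1 := by
  have hβ : betaK (kingsGraph d fun _ => n) k ≤ n ^ d := by
    simpa using betaK_le_card (kingsGraph d fun _ => n) k
  rw [paddedKingsDensity, div_le_one (by positivity)]
  calc (betaK (kingsGraph d fun _ => n) k : ℝ) ≤ (n : ℝ) ^ d := by exact_mod_cast hβ
    _ ≤ ((n : ℝ) + 1) ^ d := by gcongr; linarith

lemma paddedKingsDensity_mul_le {n N : ℕ} (h : n ≤ N) :
    paddedKingsDensity d k n * (1 - n / ((N : ℝ) + 1)) ^ d ≤ paddedKingsDensity d k N := by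
  have hN : N + 1 ≤ (N + 1) / (n + 1) * (n + 1) + n := by
    have := Nat.div_add_mod' (N + 1) (n + 1)
    have := Nat.mod_lt (N + 1) (show 0 < n + 1 by omega)
    omega
  set q := (N + 1) / (n + 1)
  have hpack := prod_mul_betaK_kingsGraph_le_betaK (d := d) (n := fun _ => n) (N := fun _ => N)
    (q := fun _ => q) (fun _ => Nat.div_mul_le_self _ _) k
  rw [Finset.prod_const, Finset.card_univ, Fintype.card_fin] at hpack
  have hq : (N : ℝ) + 1 - n ≤ q * (n + 1) := by
    have : ((N + 1 : ℕ) : ℝ) ≤ (q * (n + 1) + n : ℕ) := by exact_mod_cast hN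
    push_cast at this
    linarith
  have hn : 0 ≤ paddedKingsDensity d k n := by unfold paddedKingsDensity; positivity
  calc paddedKingsDensity d k n * (1 - n / ((N : ℝ) + 1)) ^ d
      ≤ paddedKingsDensity d k n * (q * (n + 1) / ((N : ℝ) + 1)) ^ d := by
        have : (n : ℝ) ≤ N + 1 := by exact_mod_cast (by omega : n ≤ N + 1)
        rw [one_sub_div (by positivity)]
        gcongr
    _ = (q ^ d * betaK (kingsGraph d fun _ => n) k : ℕ) / ((N : ℝ) + 1) ^ d := by
        rw [paddedKingsDensity, div_pow]
        push_cast
        field_simp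
        rw [mul_pow]
        ring
    _ ≤ paddedKingsDensity d k N := by
        rw [paddedKingsDensity]
        gcongr

lemma paddedKingsDensity_le_torus (N : ℕ) :
    paddedKingsDensity d k N ≤ betaK (torusGraph d fun _ => N + 1) k / ((N : ℝ) + 1) ^ d := by
  rw [paddedKingsDensity]
  gcongr
  exact betaK_le_betaK_of_embedding (kingsGraphEmbeddingTorusGraph d fun _ => N)

lemma torus_le_paddedKingsDensity_add (N : ℕ) :
    betaK (torusGraph d fun _ => N + 1) k / ((N : ℝ) + 1) ^ d ≤
      paddedKingsDensity d k N + (1 - (1 - 1 / ((N : ℝ) + 1)) ^ d) := by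
  have h : betaK (torusGraph d fun _ => N + 1) k ≤
      betaK (kingsGraph d fun _ => N) k + ((N + 1) ^ d - N ^ d) := by
    simpa using
      betaK_le_betaK_add_of_embedding (k := k) (kingsGraphEmbeddingTorusGraph d fun _ => N)
  have h' : (betaK (torusGraph d fun _ => N + 1) k : ℝ) ≤
      betaK (kingsGraph d fun _ => N) k + (((N : ℝ) + 1) ^ d - (N : ℝ) ^ d) := by
    have := (Nat.cast_le (α := ℝ)).mpr h
    push_cast [Nat.cast_sub (Nat.pow_le_pow_left N.le_succ d)] at this
    exact this
  rw [paddedKingsDensity, one_sub_div (by positivity), add_sub_cancel_right, div_pow,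
    one_sub_div (by positivity), ← add_div, div_le_div_iff_of_pos_right (by positivity)]
  linarith

end paddedKingsDensity

theorem stmt_1_general (d : ℕ) (k : ℕ) :
    ∃ L : ℝ, Filter.Tendsto
      (fun n : ℕ => (betaK (torusGraph d (fun _ => n)) k : ℝ) / (n : ℝ) ^ d)
      Filter.atTop (nhds L) := by
  have hc : Tendsto (paddedKingsDensity d k) atTop (𝓝 (⨆ n, paddedKingsDensity d k n)) :=
    tendsto_iSup_of_forall_mul_le ⟨1, by rintro _ ⟨n, rfl⟩; exact paddedKingsDensity_le_one n⟩
      (fun n => tendsto_one_sub_div_add_one_pow n d) fun _ _ => paddedKingsDensity_mul_le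
  have hc' : Tendsto (fun N => paddedKingsDensity d k N + (1 - (1 - 1 / ((N : ℝ) + 1)) ^ d))
      atTop (𝓝 (⨆ n, paddedKingsDensity d k n)) := by
    simpa using
      hc.add ((tendsto_const_nhds (x := (1 : ℝ))).sub (tendsto_one_sub_div_add_one_pow 1 d))
  refine ⟨⨆ n, paddedKingsDensity d k n, (tendsto_add_atTop_iff_nat 1).mp ?_⟩
  push_cast
  exact tendsto_of_tendsto_of_tendsto_of_le_of_le hc hc' paddedKingsDensity_le_torus
    torus_le_paddedKingsDensity_add

/-- the sequence τ_k^(d)(n) = β_k(T^(d)[n])/n^d converges. -/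
theorem stmt_1 (d : ℕ) (hd : 1 ≤ d) (k : ℕ) :
    ∃ L : ℝ, Filter.Tendsto
      (fun n : ℕ => (betaK (torusGraph d (fun _ => n)) k : ℝ) / (n : ℝ) ^ d)
      Filter.atTop (nhds L) :=
  stmt_1_general d k
end

section
/- For every dimension d ≥ 1, the sequence ρ^(d)(n) = h(K^(d)[n])/n^d converges as n → ∞. -/
open Filter Topology

/-!
Cut the grid `[n]^d` into `⌊n / (a + 1)⌋^d` blocks of side `a + 1` and place a copy of an
optimal half-dependent set of `K^(d)[a]` in the first `a` rows (in every coordinate) of each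
block. The empty layer separates the copies and degrees only grow in the larger grid, so the
union is half-dependent: `h(n) ≥ ⌊n / (a + 1)⌋^d h(a)`. With `L = sup_m h(m) / (m + 1)^d`,
this bounds `h(n) / n^d` from below by essentially `h(a) / (a + 1)^d`, which is close to `L`
for a suitable `a`, while `h(n) / n^d ≤ L ((n + 1) / n)^d` bounds it from above.
-/

open Set Function

section HalfNum

variable {V W B : Type*}

lemma halfNum_set_nonempty (G : SimpleGraph V) :
    {m | ∃ S : Set V, IsHalfDependent G S ∧ S.ncard = m}.Nonempty :=
  ⟨0, ∅, fun _ hv => hv.elim, ncard_empty V⟩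

lemma halfNum_set_bddAbove [Finite V] (G : SimpleGraph V) :
    BddAbove {m | ∃ S : Set V, IsHalfDependent G S ∧ S.ncard = m} :=
  ⟨Nat.card V, by rintro _ ⟨S, -, rfl⟩; exact S.ncard_le_card⟩

lemma exists_isHalfDependent_ncard_eq_halfNum [Finite V] (G : SimpleGraph V) :
    ∃ S : Set V, IsHalfDependent G S ∧ S.ncard = halfNum G :=
  Nat.sSup_mem (halfNum_set_nonempty G) (halfNum_set_bddAbove G)

lemma IsHalfDependent.ncard_le_halfNum [Finite V] {G : SimpleGraph V} {S : Set V}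
    (hS : IsHalfDependent G S) : S.ncard ≤ halfNum G :=
  le_csSup (halfNum_set_bddAbove G) ⟨S, hS, rfl⟩

lemma halfNum_le_card [Finite V] (G : SimpleGraph V) : halfNum G ≤ Nat.card V := by
  obtain ⟨S, -, hS⟩ := exists_isHalfDependent_ncard_eq_halfNum G
  exact hS ▸ S.ncard_le_card

variable {G : SimpleGraph V} {H : SimpleGraph W} {Φ : B × V → W}

lemma IsHalfDependent.image_copies [Finite W] (hΦ : Injective Φ)
    (hadj : ∀ b c s t, H.Adj (Φ (b, s)) (Φ (c, t)) ↔ b = c ∧ G.Adj s t)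
    {S : Set V} (hS : IsHalfDependent G S) : IsHalfDependent H (Φ '' (univ ×ˢ S)) := by
  rintro _ ⟨⟨b, s⟩, ⟨-, hs⟩, rfl⟩
  have hinj : Injective (fun t => Φ (b, t)) := hΦ.comp (Prod.mk_right_injective b)
  have hnbr : Φ '' (univ ×ˢ S) ∩ H.neighborSet (Φ (b, s)) =
      (fun t => Φ (b, t)) '' (S ∩ G.neighborSet s) := by
    ext w
    constructor
    · rintro ⟨⟨⟨c, t⟩, ⟨-, ht⟩, rfl⟩, hw⟩
      obtain ⟨rfl, hst⟩ := (hadj b c s t).1 hw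
      exact ⟨t, ⟨ht, hst⟩, rfl⟩
    · rintro ⟨t, ⟨ht, hst⟩, rfl⟩
      exact ⟨⟨(b, t), ⟨trivial, ht⟩, rfl⟩, (hadj b b s t).2 ⟨rfl, hst⟩⟩
  have hdeg : (G.neighborSet s).ncard ≤ (H.neighborSet (Φ (b, s))).ncard :=
    ncard_le_ncard_of_injOn _ (fun t ht => (hadj b b s t).2 ⟨rfl, ht⟩) hinj.injOn (toFinite _)
  rw [hnbr, ncard_image_of_injective _ hinj]
  exact (hS s hs).trans hdeg

lemma card_mul_halfNum_le_halfNum [Finite V] [Finite W] (hΦ : Injective Φ)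
    (hadj : ∀ b c s t, H.Adj (Φ (b, s)) (Φ (c, t)) ↔ b = c ∧ G.Adj s t) :
    Nat.card B * halfNum G ≤ halfNum H := by
  obtain ⟨S, hS, hcard⟩ := exists_isHalfDependent_ncard_eq_halfNum G
  have := (hS.image_copies hΦ hadj).ncard_le_halfNum
  rwa [ncard_image_of_injective _ hΦ, ncard_prod, ncard_univ, hcard] at this

end HalfNum

section Blocks

/-- The gap `s, t < a` keeps positions in different blocks of side `a + 1` at distance `≥ 2`. -/
lemma abs_block_sub_le_one_iff {a b c s t : ℤ} (hs₀ : 0 ≤ s) (hs : s < a) (ht₀ : 0 ≤ t)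
    (ht : t < a) : |(c * (a + 1) + t) - (b * (a + 1) + s)| ≤ 1 ↔ c = b ∧ |t - s| ≤ 1 := by
  constructor
  · intro h
    have hcb : c = b := by
      rw [abs_le] at h
      rcases lt_trichotomy c b with hlt | heq | hgt
      · nlinarith
      · exact heq
      · nlinarith
    subst hcb
    exact ⟨rfl, by rwa [add_sub_add_left_eq_sub] at h⟩
  · rintro ⟨rfl, h⟩
    rwa [add_sub_add_left_eq_sub]

variable {d : ℕ} {a q n : Fin d → ℕ}

def kingsBlockEmbedding (h : ∀ i, q i * (a i + 1) ≤ n i) :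
    (∀ i, Fin (q i)) × (∀ i, Fin (a i)) → ∀ i, Fin (n i) :=
  fun p i => ⟨p.1 i * (a i + 1) + p.2 i, by nlinarith [(p.1 i).isLt, (p.2 i).isLt, h i]⟩

lemma abs_kingsBlockEmbedding_sub_le_one_iff (h : ∀ i, q i * (a i + 1) ≤ n i)
    (p p' : (∀ i, Fin (q i)) × (∀ i, Fin (a i))) (i : Fin d) :
    |(kingsBlockEmbedding h p' i : ℤ) - kingsBlockEmbedding h p i| ≤ 1 ↔
      p'.1 i = p.1 i ∧ |(p'.2 i : ℤ) - p.2 i| ≤ 1 := by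
  simp only [kingsBlockEmbedding, Nat.cast_add, Nat.cast_mul, Nat.cast_one, Fin.ext_iff,
    ← Nat.cast_inj (R := ℤ)]
  exact abs_block_sub_le_one_iff (by positivity) (by exact_mod_cast (p.2 i).isLt)
    (by positivity) (by exact_mod_cast (p'.2 i).isLt)

lemma kingsBlockEmbedding_injective (h : ∀ i, q i * (a i + 1) ≤ n i) :
    Injective (kingsBlockEmbedding h) := by
  intro p p' hp
  have hcoord i := (abs_kingsBlockEmbedding_sub_le_one_iff h p p' i).1 (by simp [hp])
  have h₁ : p.1 = p'.1 := funext fun i => ((hcoord i).1).symm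
  refine Prod.ext h₁ (funext fun i => Fin.ext ?_)
  have := congrArg Fin.val (congrFun hp i)
  simp only [kingsBlockEmbedding, h₁] at this
  omega

lemma kingsGraph_adj_kingsBlockEmbedding (h : ∀ i, q i * (a i + 1) ≤ n i)
    (b c : ∀ i, Fin (q i)) (s t : ∀ i, Fin (a i)) :
    (kingsGraph d n).Adj (kingsBlockEmbedding h (b, s)) (kingsBlockEmbedding h (c, t)) ↔
      b = c ∧ (kingsGraph d a).Adj s t := by
  have hcoord i := abs_kingsBlockEmbedding_sub_le_one_iff h (b, s) (c, t) i
  constructor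
  · rintro ⟨hne, hle⟩
    obtain rfl : b = c := funext fun i => (((hcoord i).1 (hle i)).1).symm
    exact ⟨rfl, fun hst => hne (hst ▸ rfl), fun i => ((hcoord i).1 (hle i)).2⟩
  · rintro ⟨rfl, hne, hle⟩
    exact ⟨(kingsBlockEmbedding_injective h).ne (by simpa using hne),
      fun i => (hcoord i).2 ⟨rfl, hle i⟩⟩

lemma prod_mul_halfNum_kingsGraph_le (h : ∀ i, q i * (a i + 1) ≤ n i) :
    (∏ i, q i) * halfNum (kingsGraph d a) ≤ halfNum (kingsGraph d n) := by
  simpa [Nat.card_pi] using card_mul_halfNum_le_halfNum (kingsBlockEmbedding_injective h)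
    (kingsGraph_adj_kingsBlockEmbedding h)

end Blocks

section Convergence

variable {d : ℕ} {u : ℕ → ℕ}

lemma div_succ_pow_le_one (hle : ∀ n, u n ≤ n ^ d) (m : ℕ) :
    (u m : ℝ) / (m + 1) ^ d ≤ 1 := by
  rw [div_le_one (by positivity)]
  exact_mod_cast (hle m).trans (Nat.pow_le_pow_left m.le_succ d)

lemma div_pow_le_mul_one_add_inv_pow {L : ℝ} (hL : ∀ m, (u m : ℝ) / (m + 1) ^ d ≤ L)
    {n : ℕ} (hn : n ≠ 0) : (u n : ℝ) / n ^ d ≤ L * (1 + 1 / n) ^ d := by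
  have hu : (u n : ℝ) ≤ L * (n + 1) ^ d := (div_le_iff₀ (by positivity)).1 (hL n)
  calc (u n : ℝ) / n ^ d ≤ L * (n + 1) ^ d / n ^ d := by gcongr
    _ = L * (1 + 1 / n) ^ d := by
      rw [mul_div_assoc, ← div_pow, add_div, div_self (by exact_mod_cast hn)]

lemma mul_sub_inv_pow_le_div_pow (hsuper : ∀ a n, (n / (a + 1)) ^ d * u a ≤ u n) {a n : ℕ}
    (han : a + 1 ≤ n) : (u a : ℝ) * (1 / (a + 1) - 1 / n) ^ d ≤ (u n : ℝ) / n ^ d := by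
  have hn : (0 : ℝ) < n := by exact_mod_cast (a.succ_pos.trans_le han)
  have hq : (n : ℝ) / (a + 1) - 1 ≤ (n / (a + 1) : ℕ) := by
    have := Nat.sub_one_lt_floor ((n : ℝ) / (a + 1 : ℕ))
    rw [Nat.floor_div_eq_div] at this
    exact_mod_cast this.le
  have hnonneg : 0 ≤ (n : ℝ) / (a + 1) - 1 := by
    rw [sub_nonneg, one_le_div (by positivity)]
    exact_mod_cast han
  rw [le_div_iff₀ (by positivity)]
  calc (u a : ℝ) * (1 / (a + 1) - 1 / n) ^ d * n ^ d = u a * ((n : ℝ) / (a + 1) - 1) ^ d := by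
        rw [mul_assoc, ← mul_pow, sub_mul, one_div_mul_cancel hn.ne', one_div_mul_eq_div]
    _ ≤ u a * ((n / (a + 1) : ℕ) : ℝ) ^ d := by gcongr
    _ ≤ u n := by rw [mul_comm]; exact_mod_cast hsuper a n

theorem tendsto_div_pow_iSup (hle : ∀ n, u n ≤ n ^ d)
    (hsuper : ∀ a n, (n / (a + 1)) ^ d * u a ≤ u n) :
    Tendsto (fun n => (u n : ℝ) / n ^ d) atTop (𝓝 (⨆ m, (u m : ℝ) / (m + 1) ^ d)) := by
  set L := ⨆ m, (u m : ℝ) / (m + 1) ^ d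
  have hbdd : BddAbove (range fun m => (u m : ℝ) / (m + 1) ^ d) :=
    ⟨1, forall_mem_range.2 (div_succ_pow_le_one hle)⟩
  have hinv : Tendsto (fun n : ℕ => 1 / (n : ℝ)) atTop (𝓝 0) :=
    tendsto_one_div_atTop_nhds_zero_nat
  refine tendsto_order.2 ⟨fun b hb => ?_, fun b hb => ?_⟩
  · obtain ⟨a, ha⟩ := exists_lt_of_lt_ciSup hb
    have hlim : Tendsto (fun n : ℕ => (u a : ℝ) * (1 / (a + 1) - 1 / n) ^ d) atTop
        (𝓝 ((u a : ℝ) / (a + 1) ^ d)) := by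
      simpa [div_eq_mul_inv] using
        ((tendsto_const_nhds (x := 1 / ((a : ℝ) + 1))).sub hinv |>.pow d).const_mul (u a : ℝ)
    filter_upwards [hlim.eventually_const_lt ha, eventually_ge_atTop (a + 1)] with n hbn han
    exact hbn.trans_le (mul_sub_inv_pow_le_div_pow hsuper han)
  · have hlim : Tendsto (fun n : ℕ => L * (1 + 1 / (n : ℝ)) ^ d) atTop (𝓝 L) := by
      simpa using ((tendsto_const_nhds (x := (1 : ℝ))).add hinv |>.pow d).const_mul L
    filter_upwards [hlim.eventually_lt_const hb, eventually_ne_atTop 0] with n hbn hn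
    exact (div_pow_le_mul_one_add_inv_pow (le_ciSup hbdd) hn).trans_lt hbn

end Convergence

theorem stmt_3_general (d : ℕ) :
    ∃ L : ℝ, Filter.Tendsto
      (fun n : ℕ => (halfNum (kingsGraph d (fun _ => n)) : ℝ) / (n : ℝ) ^ d)
      Filter.atTop (nhds L) := by
  refine ⟨_, tendsto_div_pow_iSup (fun n => ?_) (fun a n => ?_)⟩
  · simpa [Nat.card_pi] using halfNum_le_card (kingsGraph d fun _ => n)
  · simpa using prod_mul_halfNum_kingsGraph_le (d := d) (q := fun _ => n / (a + 1))
      (fun _ => Nat.div_mul_le_self n (a + 1))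

/-- the sequence ρ^(d)(n) = h(K^(d)[n])/n^d converges. -/
theorem stmt_3 (d : ℕ) (hd : 1 ≤ d) :
    ∃ L : ℝ, Filter.Tendsto
      (fun n : ℕ => (halfNum (kingsGraph d (fun _ => n)) : ℝ) / (n : ℝ) ^ d)
      Filter.atTop (nhds L) :=
  stmt_3_general d
end

section
/- For every integer n ≥ 3, every 2-dependent set of vertices in the toroidal kings graph T^(2)[n] = T[n,n] has cardinality at most n²/2. -/
open Filter Topology

/-!
Cover the torus by the `2 × ⋯ × 2` windows `∏ i, {b i, b i + 1}`. Every vertex lies in `2 ^ d`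
windows; two distinct vertices sharing a window are adjacent, and (as `m i ≥ 3`) they share at
most `2 ^ (d - 1)` windows, since in a coordinate where they differ only one window position is
common. So if `w b` counts the points of a `k`-dependent set `s` in window `b`, then
`∑ w b = 2 ^ d * #s` and `2 * ∑ (w b) ^ 2 ≤ 2 ^ d * (k + 2) * #s`, and Cauchy–Schwarz
`(∑ w b) ^ 2 ≤ N * ∑ (w b) ^ 2` gives `2 ^ (d + 1) * #s ≤ (k + 2) * N`.
-/

open Finset

namespace Finset

variable {ι α : Type*} [Fintype ι] [DecidableEq α]

theorem sum_card_inter_eq_sum_card_filter_mem (s : Finset α) (f : ι → Finset α) :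
    ∑ i, #(s ∩ f i) = ∑ a ∈ s, #{i | a ∈ f i} := by
  simp_rw [← filter_mem_eq_inter, card_eq_sum_ones, sum_filter]
  exact sum_comm

theorem sum_card_inter_sq_eq_sum_sum_card_filter_mem (s : Finset α) (f : ι → Finset α) :
    ∑ i, #(s ∩ f i) ^ 2 = ∑ a ∈ s, ∑ b ∈ s, #{i | a ∈ f i ∧ b ∈ f i} := by
  simp_rw [sq, ← filter_mem_eq_inter, card_eq_sum_ones, sum_filter, sum_mul_sum,
    ite_zero_mul_ite_zero, one_mul]
  rw [sum_comm]
  exact sum_congr rfl fun a _ => sum_comm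

end Finset

section PairSubOne

variable {R : Type*} [CommRing R] [DecidableEq R]

theorem card_pair_sub_one [Nontrivial R] (x : R) : #{x, x - 1} = 2 :=
  card_pair fun h => one_ne_zero (by linear_combination h)

theorem card_pair_sub_one_inter_le_one (h2 : (2 : R) ≠ 0) {x y : R} (hxy : x ≠ y) :
    #({x, x - 1} ∩ {y, y - 1}) ≤ 1 := by
  refine card_le_one.2 fun z hz w hw => ?_
  simp only [mem_inter, mem_insert, mem_singleton] at hz hw
  grind

end PairSubOne

theorem ZMod.two_ne_zero_of_three_le {n : ℕ} (hn : 3 ≤ n) : (2 : ZMod n) ≠ 0 := by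
  intro h
  have := (ZMod.natCast_eq_zero_iff 2 n).1 (by exact_mod_cast h)
  have := Nat.le_of_dvd two_pos this
  omega

theorem IsKDependent.card_filter_adj_le {V : Type*} {G : SimpleGraph V} [DecidableRel G.Adj]
    {k : ℕ} {s : Finset V} (hs : IsKDependent G k s) {u : V} (hu : u ∈ s) :
    #{v ∈ s | G.Adj u v} ≤ k := by
  simpa [← Set.ncard_coe_finset, coe_filter, Set.inter_def] using hs u hu

namespace torusGraph

variable {d : ℕ} {m : Fin d → ℕ}

instance : DecidableRel (torusGraph d m).Adj := fun u v =>
  inferInstanceAs (Decidable (u ≠ v ∧ _))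

def window (b : ∀ i, ZMod (m i)) : Finset (∀ i, ZMod (m i)) :=
  Fintype.piFinset fun i => {b i, b i + 1}

theorem mem_window {b v : ∀ i, ZMod (m i)} :
    v ∈ window b ↔ ∀ i, v i = b i ∨ v i = b i + 1 := by
  simp [window]

theorem adj_of_mem_window {b u v : ∀ i, ZMod (m i)} (huv : u ≠ v) (hu : u ∈ window b)
    (hv : v ∈ window b) : (torusGraph d m).Adj u v := by
  refine ⟨huv, fun i => ?_⟩
  rcases mem_window.1 hu i with hu | hu <;> rcases mem_window.1 hv i with hv | hv <;> simp [hu, hv]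

variable [∀ i, NeZero (m i)]

theorem filter_mem_window_and_mem_window (u v : ∀ i, ZMod (m i)) :
    ({b | u ∈ window b ∧ v ∈ window b} : Finset _) =
      Fintype.piFinset fun i => {u i, u i - 1} ∩ {v i, v i - 1} := by
  ext b
  simp only [mem_filter, mem_univ, true_and, mem_window, Fintype.mem_piFinset, mem_inter,
    mem_insert, mem_singleton, ← forall_and]
  refine forall_congr' fun i => ?_
  grind

theorem card_filter_mem_window (hm : ∀ i, m i ≠ 1) (v : ∀ i, ZMod (m i)) :
    #{b | v ∈ window b} = 2 ^ d := by
  have : ∀ i, Nontrivial (ZMod (m i)) := fun i => ZMod.nontrivial_iff.2 (hm i)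
  simpa [card_pair_sub_one] using congrArg card (filter_mem_window_and_mem_window v v)

theorem two_mul_card_filter_mem_window_le (hm : ∀ i, (2 : ZMod (m i)) ≠ 0)
    {u v : ∀ i, ZMod (m i)} (huv : u ≠ v) :
    2 * #{b | u ∈ window b ∧ v ∈ window b} ≤ 2 ^ d := by
  obtain ⟨j, hj⟩ := Function.ne_iff.1 huv
  have hinter (i : Fin d) : #({u i, u i - 1} ∩ {v i, v i - 1}) ≤ 2 :=
    (card_le_card inter_subset_left).trans (card_insert_le _ _)
  calc 2 * #{b | u ∈ window b ∧ v ∈ window b}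
      = 2 * (#({u j, u j - 1} ∩ {v j, v j - 1}) *
          ∏ i ∈ univ.erase j, #({u i, u i - 1} ∩ {v i, v i - 1})) := by
        rw [filter_mem_window_and_mem_window, Fintype.card_piFinset]
        exact congrArg _ (mul_prod_erase _ _ (mem_univ j)).symm
    _ ≤ 2 * (1 * ∏ i ∈ univ.erase j, 2) := by
        gcongr with i
        exacts [card_pair_sub_one_inter_le_one (hm j) hj, hinter i]
    _ = 2 ^ d := by rw [one_mul, mul_prod_erase univ (fun _ => 2) (mem_univ j)]; simp

theorem two_mul_sum_card_filter_mem_window_le (hm : ∀ i, 3 ≤ m i)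
    (s : Finset (∀ i, ZMod (m i))) (u : ∀ i, ZMod (m i)) :
    2 * ∑ v ∈ s, #{b | u ∈ window b ∧ v ∈ window b} ≤
      2 ^ d * (2 + #{v ∈ s | (torusGraph d m).Adj u v}) := by
  have hm1 (i : Fin d) : m i ≠ 1 := by have := hm i; omega
  have hterm (v : ∀ i, ZMod (m i)) : 2 * #{b | u ∈ window b ∧ v ∈ window b} ≤
      2 ^ d * (2 * (if u = v then 1 else 0) + if (torusGraph d m).Adj u v then 1 else 0) := by
    by_cases huv : u = v
    · subst huv
      simp [card_filter_mem_window hm1, mul_comm]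
    by_cases hadj : (torusGraph d m).Adj u v
    · simpa [huv, hadj] using
        two_mul_card_filter_mem_window_le (fun i => ZMod.two_ne_zero_of_three_le (hm i)) huv
    · have : #{b | u ∈ window b ∧ v ∈ window b} = 0 := by
        refine card_eq_zero.2 (filter_eq_empty_iff.2 fun b _ hb => hadj ?_)
        exact adj_of_mem_window huv hb.1 hb.2
      simp [this]
  calc 2 * ∑ v ∈ s, #{b | u ∈ window b ∧ v ∈ window b}
      ≤ ∑ v ∈ s, 2 ^ d *
          (2 * (if u = v then 1 else 0) + if (torusGraph d m).Adj u v then 1 else 0) := by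
        rw [mul_sum]; exact sum_le_sum fun v _ => hterm v
    _ ≤ 2 ^ d * (2 + #{v ∈ s | (torusGraph d m).Adj u v}) := by
        rw [← mul_sum, sum_add_distrib, ← mul_sum, sum_ite_eq, sum_boole, Nat.cast_id]
        gcongr
        split_ifs <;> simp

theorem two_pow_succ_mul_card_le_of_isKDependent (hm : ∀ i, 3 ≤ m i) {k : ℕ}
    {s : Finset (∀ i, ZMod (m i))} (hs : IsKDependent (torusGraph d m) k s) :
    2 ^ (d + 1) * #s ≤ (k + 2) * ∏ i, m i := by
  have hsum : ∑ b, #(s ∩ window b) = 2 ^ d * #s := by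
    rw [sum_card_inter_eq_sum_card_filter_mem,
      sum_congr rfl fun v _ => card_filter_mem_window (fun i => by have := hm i; omega) v,
      sum_const, smul_eq_mul, mul_comm]
  have hsq : 2 * ∑ b, #(s ∩ window b) ^ 2 ≤ 2 ^ d * (k + 2) * #s := by
    rw [sum_card_inter_sq_eq_sum_sum_card_filter_mem, mul_sum]
    calc ∑ u ∈ s, 2 * ∑ v ∈ s, #{b | u ∈ window b ∧ v ∈ window b}
        ≤ ∑ _u ∈ s, 2 ^ d * (2 + k) := sum_le_sum fun u hu =>
          (two_mul_sum_card_filter_mem_window_le hm s u).trans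
            (by gcongr; exact hs.card_filter_adj_le hu)
      _ = 2 ^ d * (k + 2) * #s := by rw [sum_const, smul_eq_mul]; ring
  have hcs : (∑ b, #(s ∩ window b)) ^ 2 ≤ (∏ i, m i) * ∑ b, #(s ∩ window b) ^ 2 := by
    simpa [ZMod.card] using sq_sum_le_card_mul_sum_sq (s := univ) (f := fun b => #(s ∩ window b))
  rcases (#s).eq_zero_or_pos with hs0 | hs0
  · simp [hs0]
  refine le_of_mul_le_mul_right ?_ (by positivity : 0 < 2 ^ d * #s)
  calc 2 ^ (d + 1) * #s * (2 ^ d * #s) = 2 * (∑ b, #(s ∩ window b)) ^ 2 := by rw [hsum]; ring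
    _ ≤ (∏ i, m i) * (2 * ∑ b, #(s ∩ window b) ^ 2) := by rw [mul_left_comm]; gcongr
    _ ≤ (∏ i, m i) * (2 ^ d * (k + 2) * #s) := by gcongr
    _ = (k + 2) * (∏ i, m i) * (2 ^ d * #s) := by ring

end torusGraph

/-- every 2-dependent set in T[n,n] has at most n²/2 vertices. -/
theorem stmt_8 (n : ℕ) (hn : 3 ≤ n)
    (S : Set (∀ i : Fin 2, ZMod (![n, n] i)))
    (hS : IsKDependent (torusGraph 2 ![n, n]) 2 S) :
    (S.ncard : ℝ) ≤ (n : ℝ) ^ 2 / 2 := by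
  classical
  have hm : ∀ i, 3 ≤ ![n, n] i := fun i => by fin_cases i <;> simpa
  have : ∀ i, NeZero (![n, n] i) := fun i => ⟨by have := hm i; omega⟩
  have key := torusGraph.two_pow_succ_mul_card_le_of_isKDependent hm (s := S.toFinset)
    (by rwa [Set.coe_toFinset])
  rw [← Set.ncard_eq_toFinset_card', Fin.prod_univ_two] at key
  rw [le_div_iff₀ two_pos]
  have : 8 * S.ncard ≤ 4 * (n * n) := by simpa using key
  exact_mod_cast (by linarith : S.ncard * 2 ≤ n ^ 2)
end

section
/- The sequence β_2(T^(2)[n])/n² converges to 1/2 as n → ∞; that is, the 2-dependent limiting density τ_2^(2) for two-dimensional toroidal kings graphs equals 1/2. -/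
open Filter Topology

/-!
If a 2-dependent set `S ⊆ T²[n]` contained seven of the eight neighbours of some `v`, then
`w = v + (s, 0) ∈ S` for `s = 1` or `s = -1`, and at least three of the four common neighbours
`v + (s, ±1)`, `v + (0, ±1)` of `v` and `w` would lie in `S`, too many for `w`. So every vertex has
at most six neighbours in `S`, and double counting adjacent pairs with one end in `S` gives
`8|S| ≤ 2|S| + 6(n² - |S|)`, i.e. `2|S| ≤ n²`. Conversely the union of the `⌊n/2⌋` rows
`0, 2, …, 2⌊n/2⌋ - 2` is 2-dependent: as the last of them is at most `n - 2`, no two of these rows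
are adjacent, even cyclically, so a vertex sees only its two neighbours in its own row.
-/

open Finset SimpleGraph

namespace SimpleGraph

variable {V : Type*} (G : SimpleGraph V)

section BetaK

variable (k : ℕ)

lemma betaK_le {B : ℕ} (h : ∀ S, IsKDependent G k S → S.ncard ≤ B) : betaK G k ≤ B :=
  csSup_le ⟨0, ∅, fun _ hv => hv.elim, Set.ncard_empty V⟩ fun _ ⟨S, hS, hm⟩ => hm ▸ h S hS

lemma le_betaK [Finite V] {S : Set V} (hS : IsKDependent G k S) : S.ncard ≤ betaK G k :=
  le_csSup ⟨Nat.card V, fun _ ⟨T, _, hm⟩ => hm ▸ Set.ncard_le_card T⟩ ⟨S, hS, rfl⟩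

variable {G k} [Fintype V] [DecidableEq V] [DecidableRel G.Adj]

lemma isKDependent_coe_iff {S : Finset V} :
    IsKDependent G k (S : Set V) ↔ ∀ v ∈ S, #(S ∩ G.neighborFinset v) ≤ k := by
  simp only [IsKDependent, Finset.mem_coe, ← Set.ncard_coe_finset, Finset.coe_inter,
    coe_neighborFinset]

end BetaK

variable [Fintype V] [DecidableEq V] [DecidableRel G.Adj]

lemma sum_card_inter_neighborFinset (S : Finset V) :
    ∑ v, #(S ∩ G.neighborFinset v) = ∑ u ∈ S, G.degree u := by
  have := sum_card_bipartiteAbove_eq_sum_card_bipartiteBelow (s := univ) (t := S) (r := G.Adj)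
  convert this using 3
  · ext; simp [bipartiteAbove]
  · rw [← card_neighborFinset_eq_degree]; congr 1; ext; simp [bipartiteBelow, adj_comm]

lemma degree_mul_card_le {d k m : ℕ} (hreg : G.IsRegularOfDegree d) {S : Finset V}
    (hin : ∀ v ∈ S, #(S ∩ G.neighborFinset v) ≤ k)
    (hout : ∀ v ∉ S, #(S ∩ G.neighborFinset v) ≤ m) :
    d * #S ≤ k * #S + m * #Sᶜ := calc
  d * #S = ∑ v, #(S ∩ G.neighborFinset v) := by
    rw [sum_card_inter_neighborFinset, sum_congr rfl fun u _ => hreg u, sum_const, smul_eq_mul,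
      mul_comm]
  _ = ∑ v ∈ S, #(S ∩ G.neighborFinset v) + ∑ v ∈ Sᶜ, #(S ∩ G.neighborFinset v) :=
    (sum_add_sum_compl S _).symm
  _ ≤ ∑ _v ∈ S, k + ∑ _v ∈ Sᶜ, m :=
    add_le_add (sum_le_sum hin) (sum_le_sum fun v hv => hout v (mem_compl.mp hv))
  _ = k * #S + m * #Sᶜ := by simp only [sum_const, smul_eq_mul, mul_comm]

end SimpleGraph

section Torus

variable {d : ℕ} {n : Fin d → ℕ}

instance : DecidableRel (torusGraph d n).Adj := fun u v =>
  inferInstanceAs (Decidable (u ≠ v ∧ ∀ _, _))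

lemma torusGraph_adj_iff_adj_zero {u v : ∀ i, ZMod (n i)} :
    (torusGraph d n).Adj u v ↔ (torusGraph d n).Adj 0 (v - u) := by
  simp [torusGraph, sub_eq_zero, eq_comm]

@[simp] lemma torusGraph_adj_add_left {u v w : ∀ i, ZMod (n i)} :
    (torusGraph d n).Adj (w + u) (w + v) ↔ (torusGraph d n).Adj u v := by
  rw [torusGraph_adj_iff_adj_zero, add_sub_add_left_eq_sub, ← torusGraph_adj_iff_adj_zero]

@[simp] lemma torusGraph_adj_add_self {v w : ∀ i, ZMod (n i)} :
    (torusGraph d n).Adj w (w + v) ↔ (torusGraph d n).Adj 0 v := by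
  simpa using torusGraph_adj_add_left (u := 0) (v := v) (w := w)

lemma ZMod.card_neg_one_zero_one {m : ℕ} (hm : 3 ≤ m) :
    #({-1, 0, 1} : Finset (ZMod m)) = 3 := by
  have : Fact (2 < m) := ⟨hm⟩
  have : Fact (1 < m) := ⟨by omega⟩
  rw [card_insert_of_notMem, card_pair zero_ne_one]
  simp [CharP.neg_one_ne_one (ZMod m) m]

variable [∀ i, NeZero (n i)]

lemma torusGraph_neighborFinset_zero :
    (torusGraph d n).neighborFinset 0 = (Fintype.piFinset fun _ => {-1, 0, 1}).erase 0 := by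
  ext v
  rw [mem_neighborFinset]
  simp [torusGraph, eq_comm]

lemma torusGraph_neighborFinset (v : ∀ i, ZMod (n i)) :
    (torusGraph d n).neighborFinset v =
      ((torusGraph d n).neighborFinset 0).map (addLeftEmbedding v) := by
  ext w
  simp only [Finset.mem_map, mem_neighborFinset, addLeftEmbedding_apply]
  refine ⟨fun h => ⟨w - v, torusGraph_adj_iff_adj_zero.mp h, add_sub_cancel v w⟩, ?_⟩
  rintro ⟨x, hx, rfl⟩
  simpa

lemma torusGraph_isRegularOfDegree (hn : ∀ i, 3 ≤ n i) :
    (torusGraph d n).IsRegularOfDegree (3 ^ d - 1) := fun v => by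
  rw [← card_neighborFinset_eq_degree, torusGraph_neighborFinset, card_map,
    torusGraph_neighborFinset_zero, card_erase_of_mem (by simp), Fintype.card_piFinset]
  simp [ZMod.card_neg_one_zero_one (hn _)]

end Torus

local notation "T²[" n "]" => torusGraph 2 (fun _ => n)

section KingsTorus

variable {n : ℕ} [NeZero n]

lemma three_le_card_inter_neighborFinset_of_card_sdiff_le_one (hn : 3 ≤ n)
    {S : Finset (Fin 2 → ZMod n)} {v : Fin 2 → ZMod n}
    (hmiss : #((T²[n]).neighborFinset v \ S) ≤ 1) {s : ZMod n} (hs : s = 1 ∨ s = -1) :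
    3 ≤ #(S ∩ (T²[n]).neighborFinset (v + ![s, 0])) := by
  have : Fact (2 < n) := ⟨hn⟩
  have : Fact (1 < n) := ⟨by omega⟩
  have h1 := CharP.neg_one_ne_one (ZMod n) n
  set Q : Finset (Fin 2 → ZMod n) := {v + ![s, 1], v + ![s, -1], v + ![0, 1], v + ![0, -1]}
  have hQ : #Q = 4 := by
    rcases hs with rfl | rfl <;>
      simp [Q, card_insert_of_notMem, funext_iff, Fin.forall_fin_two, h1, h1.symm]
  have hQv : Q ⊆ (T²[n]).neighborFinset v := by
    simp only [Q, insert_subset_iff, singleton_subset_iff, mem_neighborFinset,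
      torusGraph_adj_add_self]
    rcases hs with rfl | rfl <;> simp [torusGraph, Fin.forall_fin_two, funext_iff, h1, h1.symm]
  have hQw : Q ⊆ (T²[n]).neighborFinset (v + ![s, 0]) := by
    simp only [Q, insert_subset_iff, singleton_subset_iff, mem_neighborFinset,
      torusGraph_adj_add_left]
    rcases hs with rfl | rfl <;> simp [torusGraph, Fin.forall_fin_two, funext_iff, h1, h1.symm]
  have hcommon : #Q ≤ #(S ∩ (T²[n]).neighborFinset (v + ![s, 0])) +
      #((T²[n]).neighborFinset v \ S) := by
    rw [← card_inter_add_card_sdiff Q S, inter_comm]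
    exact add_le_add (card_le_card (inter_subset_inter_left hQw))
      (card_le_card (sdiff_subset_sdiff hQv subset_rfl))
  omega

lemma card_inter_neighborFinset_le_six (hn : 3 ≤ n) {S : Finset (Fin 2 → ZMod n)}
    (hS : ∀ v ∈ S, #(S ∩ (T²[n]).neighborFinset v) ≤ 2) (v : Fin 2 → ZMod n) :
    #(S ∩ (T²[n]).neighborFinset v) ≤ 6 := by
  by_contra! h
  have hdeg : #((T²[n]).neighborFinset v) = 8 :=
    torusGraph_isRegularOfDegree (fun _ => hn) v
  have hmiss : #((T²[n]).neighborFinset v \ S) ≤ 1 := by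
    have := card_inter_add_card_sdiff ((T²[n]).neighborFinset v) S
    rw [inter_comm] at h
    omega
  have hside : v + ![1, 0] ∈ S ∨ v + ![-1, 0] ∈ S := by
    have : Fact (2 < n) := ⟨hn⟩
    have : Fact (1 < n) := ⟨by omega⟩
    have h1 := CharP.neg_one_ne_one (ZMod n) n
    by_contra! hout
    have hsub : {v + ![1, 0], v + ![-1, 0]} ⊆ (T²[n]).neighborFinset v \ S := by
      rw [insert_subset_iff, singleton_subset_iff, Finset.mem_sdiff, Finset.mem_sdiff]
      refine ⟨⟨?_, hout.1⟩, ?_, hout.2⟩ <;>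
        simp only [mem_neighborFinset, torusGraph_adj_add_self] <;>
        simp [torusGraph, Fin.forall_fin_two, funext_iff]
    have := card_le_card hsub
    rw [card_pair (by simp [funext_iff, h1.symm])] at this
    omega
  obtain ⟨s, hs, hw⟩ : ∃ s : ZMod n, (s = 1 ∨ s = -1) ∧ v + ![s, 0] ∈ S := by
    rcases hside with hw | hw
    exacts [⟨1, .inl rfl, hw⟩, ⟨-1, .inr rfl, hw⟩]
  have := three_le_card_inter_neighborFinset_of_card_sdiff_le_one hn hmiss hs
  have := hS _ hw
  omega

lemma two_mul_card_le_of_forall_card_inter_neighborFinset_le_two (hn : 3 ≤ n)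
    {S : Finset (Fin 2 → ZMod n)} (hS : ∀ v ∈ S, #(S ∩ (T²[n]).neighborFinset v) ≤ 2) :
    2 * #S ≤ n ^ 2 := by
  have hcount := (T²[n]).degree_mul_card_le (torusGraph_isRegularOfDegree fun _ => hn) hS
    fun v _ => card_inter_neighborFinset_le_six hn hS v
  have hcard_le := card_le_univ S
  rw [card_compl] at hcount
  simp only [Fintype.card_pi, ZMod.card, prod_const, card_univ, Fintype.card_fin] at hcount hcard_le
  omega

end KingsTorus

section EvenRows

variable {n : ℕ}

def evenRows (n : ℕ) : Finset (ZMod n) := (range (n / 2)).image fun k => ((2 * k : ℕ) : ZMod n)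

lemma card_evenRows : #(evenRows n) = n / 2 := by
  rw [evenRows, card_image_of_injOn, card_range]
  intro k hk k' hk' h
  simp only [coe_range, Set.mem_Iio] at hk hk'
  rw [ZMod.natCast_eq_natCast_iff', Nat.mod_eq_of_lt (by omega), Nat.mod_eq_of_lt (by omega)] at h
  omega

lemma sub_ne_one_of_mem_evenRows {r r' : ZMod n} (hr : r ∈ evenRows n) (hr' : r' ∈ evenRows n) :
    r' - r ≠ 1 := by
  simp only [evenRows, mem_image, mem_range] at hr hr'
  obtain ⟨k, hk, rfl⟩ := hr
  obtain ⟨k', hk', rfl⟩ := hr'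
  intro h
  have h' : ((2 * k' : ℕ) : ZMod n) = ((2 * k + 1 : ℕ) : ZMod n) := by
    push_cast at h ⊢
    linear_combination h
  rw [ZMod.natCast_eq_natCast_iff', Nat.mod_eq_of_lt (by omega),
    Nat.mod_eq_of_lt (by omega)] at h'
  omega

end EvenRows

section KingsTorusLower

variable {n : ℕ} [NeZero n]

lemma card_inter_neighborFinset_evenRows_le_two {v : Fin 2 → ZMod n}
    (hv : v ∈ Fintype.piFinset ![evenRows n, univ]) :
    #(Fintype.piFinset ![evenRows n, univ] ∩ (T²[n]).neighborFinset v) ≤ 2 := by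
  refine (card_le_card fun w hw => ?_).trans (card_le_two (a := v + ![0, 1]) (b := v + ![0, -1]))
  simp only [Finset.mem_inter, Fintype.mem_piFinset, Fin.forall_fin_two,
    mem_neighborFinset] at hv hw
  obtain ⟨⟨hw0, -⟩, hne, hadj⟩ := hw
  have h0 : w 0 = v 0 := by
    rcases hadj 0 with h | h | h
    · exact absurd (by linear_combination -h) (sub_ne_one_of_mem_evenRows hw0 hv.1)
    · linear_combination h
    · exact absurd h (sub_ne_one_of_mem_evenRows hv.1 hw0)
  have hw : ∀ t, w 1 - v 1 = t → w = v + ![0, t] := fun t ht => by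
    ext i
    fin_cases i
    · simp [h0]
    · simp [← ht]
  rcases hadj 1 with h | h | h
  · simp [hw _ h]
  · exact absurd ((hw 0 h).trans (by ext i; fin_cases i <;> simp)) hne.symm
  · simp [hw _ h]

end KingsTorusLower

section Beta

variable {n : ℕ}

lemma le_betaK_torusGraph_two [NeZero n] : n / 2 * n ≤ betaK (T²[n]) 2 := by
  have hS := isKDependent_coe_iff.mpr fun _ => card_inter_neighborFinset_evenRows_le_two (n := n)
  refine le_of_eq_of_le ?_ (le_betaK _ _ hS)
  rw [Set.ncard_coe_finset, Fintype.card_piFinset, Fin.prod_univ_two]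
  simp [card_evenRows]

lemma two_mul_betaK_torusGraph_two_le (hn : 3 ≤ n) : 2 * betaK (T²[n]) 2 ≤ n ^ 2 := by
  have : NeZero n := ⟨by omega⟩
  suffices betaK (T²[n]) 2 ≤ n ^ 2 / 2 by omega
  refine betaK_le _ _ fun S hS => ?_
  classical
  rw [← Set.coe_toFinset S, isKDependent_coe_iff] at hS
  have := two_mul_card_le_of_forall_card_inter_neighborFinset_le_two hn hS
  rw [← Set.ncard_coe_finset, Set.coe_toFinset] at this
  omega

lemma one_half_sub_inv_le_betaK_torusGraph_two_div (hn : 0 < n) :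
    1 / 2 - 1 / (n : ℝ) ≤ (betaK (T²[n]) 2 : ℝ) / (n : ℝ) ^ 2 := by
  have : NeZero n := ⟨hn.ne'⟩
  have hrows : (n : ℝ) ≤ 2 * ((n / 2 : ℕ) : ℝ) + 1 := by
    exact_mod_cast (by omega : n ≤ 2 * (n / 2) + 1)
  have hβ : ((n / 2 * n : ℕ) : ℝ) ≤ betaK (T²[n]) 2 := by
    exact_mod_cast le_betaK_torusGraph_two
  push_cast at hβ
  rw [le_div_iff₀ (by positivity)]
  calc (1 / 2 - 1 / (n : ℝ)) * n ^ 2 = ((n : ℝ) - 2) / 2 * n := by field_simp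
    _ ≤ ((n / 2 : ℕ) : ℝ) * n := by gcongr; linarith
    _ ≤ _ := hβ

lemma betaK_torusGraph_two_div_le_one_half (hn : 3 ≤ n) :
    (betaK (T²[n]) 2 : ℝ) / (n : ℝ) ^ 2 ≤ 1 / 2 := by
  have hβ : 2 * (betaK (T²[n]) 2 : ℝ) ≤ n ^ 2 := by
    exact_mod_cast two_mul_betaK_torusGraph_two_le hn
  rw [div_le_iff₀ (by positivity)]
  linarith

end Beta

/-- τ_2^(2) = 1/2. -/
theorem stmt_9 :
    Filter.Tendsto
      (fun n : ℕ => (betaK (torusGraph 2 (fun _ => n)) 2 : ℝ) / (n : ℝ) ^ 2)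
      Filter.atTop (nhds (1/2 : ℝ)) := by
  have hlower := (tendsto_const_nhds (x := (1 / 2 : ℝ))).sub tendsto_one_div_atTop_nhds_zero_nat
  rw [sub_zero] at hlower
  exact tendsto_of_tendsto_of_tendsto_of_le_of_le' hlower tendsto_const_nhds
    ((eventually_gt_atTop 0).mono fun _ => one_half_sub_inv_le_betaK_torusGraph_two_div)
    ((eventually_ge_atTop 3).mono fun _ => betaK_torusGraph_two_div_le_one_half)
end

section
/- Let d ≥ 1 and n ≥ 3 be integers, let c ∈ (ZMod n)^d, and let R be a nonempty subset of ZMod n. Define S(n,d,c,R) = { v ∈ (ZMod n)^d : c·v ∈ R }, and for r ∈ ZMod n let f(c,r) be the number of nonzero vectors y ∈ {−1,0,1}^d with c·y + r ∈ R. Then S(n,d,c,R) is a k-dependent set in the toroidal kings graph T^(d)[n] for k = max over r ∈ R of f(c,r). -/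
open Filter Topology

/-!
A neighbour `u` of `v` in the toroidal kings graph is `v + y` for a nonzero step
`y ∈ {-1, 0, 1}^d`, and `c·u = c·y + c·v`. So if `v ∈ S`, then `u ↦ y` embeds the neighbours
of `v` inside `S` into the steps counted by `f(c, c·v)`, which is at most `k` since `c·v ∈ R`.
-/

def IsKingStep {ι : Type*} (y : ι → ℤ) : Prop :=
  ∀ i, y i = -1 ∨ y i = 0 ∨ y i = 1

theorem finite_setOf_isKingStep {ι : Type*} [Fintype ι] [DecidableEq ι] :
    {y : ι → ℤ | IsKingStep y}.Finite := by
  refine (Set.finite_Icc (-1 : ι → ℤ) 1).subset fun y hy => ⟨fun i => ?_, fun i => ?_⟩ <;>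
    rcases hy i with h | h | h <;> simp [h]

theorem exists_isKingStep_of_adj {d : ℕ} {n : Fin d → ℕ} {u v : ∀ i, ZMod (n i)}
    (h : (torusGraph d n).Adj v u) :
    ∃ y : Fin d → ℤ, y ≠ 0 ∧ IsKingStep y ∧ u = v + fun i => (y i : ZMod (n i)) := by
  obtain ⟨hne, hstep⟩ := h
  have : ∀ i, ∃ t : ℤ, (t = -1 ∨ t = 0 ∨ t = 1) ∧ (t : ZMod (n i)) = u i - v i := fun i => by
    rcases hstep i with h | h | h
    exacts [⟨-1, by simp [h]⟩, ⟨0, by simp [h]⟩, ⟨1, by simp [h]⟩]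
  choose y hy using this
  refine ⟨y, ?_, fun i => (hy i).1, funext fun i => by simp [(hy i).2]⟩
  rintro rfl
  exact hne (funext fun i => by simpa [sub_eq_zero, eq_comm] using (hy i).2)

theorem ncard_linearLevelSet_inter_neighborSet_le {d n : ℕ} (c : Fin d → ZMod n)
    (R : Set (ZMod n)) (v : Fin d → ZMod n) :
    ({u | (∑ i, c i * u i) ∈ R} ∩ (torusGraph d fun _ => n).neighborSet v).ncard ≤
      {y : Fin d → ℤ | y ≠ 0 ∧ IsKingStep y ∧
        (∑ i, c i * ((y i : ℤ) : ZMod n)) + ∑ i, c i * v i ∈ R}.ncard := by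
  set T := {y : Fin d → ℤ | y ≠ 0 ∧ IsKingStep y ∧
    (∑ i, c i * ((y i : ℤ) : ZMod n)) + ∑ i, c i * v i ∈ R}
  have hT : T.Finite := finite_setOf_isKingStep.subset fun y hy => hy.2.1
  refine (Set.ncard_le_ncard ?_ (hT.image fun y i => v i + (y i : ZMod n))).trans
    (Set.ncard_image_le hT)
  rintro u ⟨hu, hadj⟩
  obtain ⟨y, hy0, hy, rfl⟩ := exists_isKingStep_of_adj hadj
  refine ⟨y, ⟨hy0, hy, ?_⟩, rfl⟩
  simpa [mul_add, Finset.sum_add_distrib, add_comm] using hu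

theorem stmt_12_general (d : ℕ) (n : ℕ)
    (c : Fin d → ZMod n) (R : Set (ZMod n))
    (S : Set (∀ _ : Fin d, ZMod n))
    (hSdef : S = {v | (∑ i, c i * v i) ∈ R})
    (f : (Fin d → ZMod n) → ZMod n → ℕ)
    (hf : ∀ r, f c r =
      {y : Fin d → ℤ | y ≠ 0 ∧ (∀ i, y i = -1 ∨ y i = 0 ∨ y i = 1) ∧
        (∑ i, c i * ((y i : ℤ) : ZMod n)) + r ∈ R}.ncard)
    (k : ℕ) (hk : k = sSup ((fun r => f c r) '' R)) :
    IsKDependent (torusGraph d (fun _ => n)) k S := by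
  subst hSdef hk
  intro v hv
  have hbdd : BddAbove ((fun r => f c r) '' R) := by
    refine ⟨{y : Fin d → ℤ | IsKingStep y}.ncard, ?_⟩
    rintro _ ⟨r, -, rfl⟩
    exact (hf r).trans_le (Set.ncard_le_ncard (fun y hy => hy.2.1) finite_setOf_isKingStep)
  calc _ ≤ f c (∑ i, c i * v i) := (ncard_linearLevelSet_inter_neighborSet_le c R v).trans_eq
          (hf _).symm
    _ ≤ _ := le_csSup hbdd ⟨_, hv, rfl⟩

/-- linear-congruence construction of k-dependent sets in T^(d)[n]. -/
theorem stmt_12 (d : ℕ) (hd : 1 ≤ d) (n : ℕ) (hn : 3 ≤ n)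
    (c : Fin d → ZMod n) (R : Set (ZMod n)) (hR : R.Nonempty)
    (S : Set (∀ _ : Fin d, ZMod n))
    (hSdef : S = {v | (∑ i, c i * v i) ∈ R})
    (f : (Fin d → ZMod n) → ZMod n → ℕ)
    (hf : ∀ r, f c r =
      {y : Fin d → ℤ | y ≠ 0 ∧ (∀ i, y i = -1 ∨ y i = 0 ∨ y i = 1) ∧
        (∑ i, c i * ((y i : ℤ) : ZMod n)) + r ∈ R}.ncard)
    (k : ℕ) (hk : k = sSup ((fun r => f c r) '' R)) :
    IsKDependent (torusGraph d (fun _ => n)) k S :=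
  stmt_12_general d n c R S hSdef f hf k hk
end

section
/- Let G be a finite vertex-transitive simple graph, let k ≥ 0 be an integer, and let ω : V(G) → [0,∞) be a weighting function with total weight W(ω) = Σ_{v ∈ V(G)} ω(v) > 0. Let M_k(G,ω) be the maximum of Σ_{v ∈ S} ω(v) over all k-dependent sets S ⊆ V(G). Then τ_k(G) = β_k(G)/|V(G)| ≤ M_k(G,ω)/W(ω). -/
/-!
Average over the automorphism group `Γ` of `G`. Translating a maximum `k`-dependent set `B` by an
automorphism gives a `k`-dependent set, of weight at most `M`. Since `Γ` acts transitively, the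
`Γ`-sum of `ω (g • u)` is the same for every vertex `u`, namely `|Γ| W / |V|`; summing the weights
of all translates of `B` therefore gives `|B| |Γ| W / |V| ≤ |Γ| M`.
-/

open Filter Topology

open Finset

namespace IsKDependent

variable {V : Type*} {G : SimpleGraph V} {k : ℕ}

theorem image_iso {V' : Type*} {G' : SimpleGraph V'} {S : Set V} (hS : IsKDependent G k S)
    (f : G ≃g G') : IsKDependent G' k (f '' S) := by
  rintro _ ⟨u, hu, rfl⟩
  have hnbr : f '' G.neighborSet u = G'.neighborSet (f u) := by
    ext w
    obtain ⟨w, rfl⟩ := f.surjective w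
    simp [Set.mem_image, f.injective.eq_iff, f.map_adj_iff]
  rw [← hnbr, ← Set.image_inter f.injective, Set.ncard_image_of_injective _ f.injective]
  exact hS u hu

theorem sum_le_sSup [Fintype V] (ω : V → ℝ) {S : Finset V} (hS : IsKDependent G k ↑S) :
    ∑ v ∈ S, ω v ≤ sSup {x : ℝ | ∃ S : Finset V, IsKDependent G k ↑S ∧ ∑ v ∈ S, ω v = x} := by
  refine le_csSup ((Set.finite_range fun T : Finset V => ∑ v ∈ T, ω v).subset ?_).bddAbove
    ⟨S, hS, rfl⟩
  rintro _ ⟨T, -, rfl⟩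
  exact ⟨T, rfl⟩

end IsKDependent

theorem exists_isKDependent_card_eq_betaK {V : Type*} [Finite V] (G : SimpleGraph V) (k : ℕ) :
    ∃ S : Finset V, IsKDependent G k ↑S ∧ S.card = betaK G k := by
  have hmem : betaK G k ∈ {m | ∃ S : Set V, IsKDependent G k S ∧ S.ncard = m} := by
    refine Nat.sSup_mem ⟨0, ∅, fun v hv => hv.elim, Set.ncard_empty V⟩ ⟨Nat.card V, ?_⟩
    rintro _ ⟨S, -, rfl⟩
    exact Set.ncard_le_card S
  obtain ⟨S, hS, hcard⟩ := hmem
  classical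
  have := Fintype.ofFinite V
  exact ⟨S.toFinset, by simpa using hS, by rwa [← Set.ncard_eq_toFinset_card']⟩

instance SimpleGraph.Iso.finite {V V' : Type*} [Finite V] [Finite V'] (G : SimpleGraph V)
    (G' : SimpleGraph V') : Finite (G ≃g G') :=
  Finite.of_injective _ DFunLike.coe_injective

theorem IsVertexTransitive.isPretransitive {V : Type*} {G : SimpleGraph V}
    (hG : IsVertexTransitive G) : MulAction.IsPretransitive (G ≃g G) V :=
  ⟨hG⟩

namespace MulAction

variable {Γ X : Type*} [Group Γ] [MulAction Γ X] [IsPretransitive Γ X] [Fintype X]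

theorem card_smul_sum_smul_eq [Fintype Γ] {M : Type*} [AddCommMonoid M] (ω : X → M) (x : X) :
    Fintype.card X • ∑ g : Γ, ω (g • x) = Fintype.card Γ • ∑ y, ω y := by
  have hconst : ∀ y, ∑ g : Γ, ω (g • y) = ∑ g : Γ, ω (g • x) := by
    intro y
    obtain ⟨h, rfl⟩ := exists_smul_eq Γ x y
    simp_rw [smul_smul]
    exact Fintype.sum_equiv (Equiv.mulRight h) _ _ fun _ => rfl
  calc Fintype.card X • ∑ g : Γ, ω (g • x)
      = ∑ y, ∑ g : Γ, ω (g • y) := by simp [hconst]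
    _ = ∑ g : Γ, ∑ y, ω (g • y) := sum_comm
    _ = ∑ _g : Γ, ∑ y, ω y := by
        congr! 1 with g
        exact Fintype.sum_equiv (toPerm g) _ _ fun _ => rfl
    _ = Fintype.card Γ • ∑ y, ω y := by simp

theorem card_mul_sum_le_of_forall_sum_smul_le [Finite Γ] {R : Type*} [CommRing R]
    [LinearOrder R] [IsStrictOrderedRing R] {ω : X → R} {M : R} (B : Finset X)
    (hB : ∀ g : Γ, ∑ u ∈ B, ω (g • u) ≤ M) :
    (B.card : R) * ∑ y, ω y ≤ Fintype.card X * M := by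
  have := Fintype.ofFinite Γ
  have hΓ : (0 : R) < Fintype.card Γ := by exact_mod_cast Fintype.card_pos
  refine le_of_mul_le_mul_left ?_ hΓ
  calc (Fintype.card Γ : R) * (B.card * ∑ y, ω y)
      = ∑ u ∈ B, Fintype.card X * ∑ g : Γ, ω (g • u) := by
        have hu (u : X) :
            (Fintype.card X : R) * ∑ g : Γ, ω (g • u) = Fintype.card Γ * ∑ y, ω y := by
          simpa only [nsmul_eq_mul] using card_smul_sum_smul_eq ω u
        rw [sum_congr rfl fun u _ => hu u, sum_const, nsmul_eq_mul]
        ring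
    _ = Fintype.card X * ∑ g : Γ, ∑ u ∈ B, ω (g • u) := by rw [← mul_sum, sum_comm]
    _ ≤ Fintype.card X * ∑ _g : Γ, M := by gcongr with g; exact hB g
    _ = Fintype.card Γ * (Fintype.card X * M) := by
        rw [sum_const, card_univ, nsmul_eq_mul]; ring

end MulAction

theorem stmt_14_general {V : Type*} [Fintype V] (G : SimpleGraph V)
    (hG : IsVertexTransitive G) (k : ℕ)
    (ω : V → ℝ)
    (W : ℝ) (hW : W = ∑ v, ω v) (hWpos : 0 < W)
    (M : ℝ)
    (hM : M = sSup {x : ℝ |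
        ∃ S : Finset V, IsKDependent G k ↑S ∧ ∑ v ∈ S, ω v = x}) :
    (betaK G k : ℝ) / (Fintype.card V : ℝ) ≤ M / W := by
  classical
  have := hG.isPretransitive
  obtain ⟨B, hB, hBcard⟩ := exists_isKDependent_card_eq_betaK G k
  have htranslate (g : G ≃g G) : ∑ u ∈ B, ω (g • u) ≤ M := by
    simp only [hM, RelIso.smul_def]
    rw [← sum_image fun x _ y _ h => g.injective h]
    apply IsKDependent.sum_le_sSup
    simpa using hB.image_iso g
  have hV : (0 : ℝ) < Fintype.card V := by
    exact_mod_cast card_pos.mpr (nonempty_of_sum_ne_zero (hW ▸ hWpos.ne'))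
  rw [div_le_div_iff₀ hV hWpos, ← hBcard, hW, mul_comm M]
  exact MulAction.card_mul_sum_le_of_forall_sum_smul_le B htranslate

/-- weighted upper bound for the k-dependent density of a
vertex-transitive graph. -/
theorem stmt_14 {V : Type*} [Fintype V] (G : SimpleGraph V)
    (hG : IsVertexTransitive G) (k : ℕ)
    (ω : V → ℝ) (hω : ∀ v, 0 ≤ ω v)
    (W : ℝ) (hW : W = ∑ v, ω v) (hWpos : 0 < W)
    (M : ℝ)
    (hM : M = sSup {x : ℝ |
        ∃ S : Finset V, IsKDependent G k ↑S ∧ ∑ v ∈ S, ω v = x}) :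
    (betaK G k : ℝ) / (Fintype.card V : ℝ) ≤ M / W :=
  stmt_14_general G hG k ω W hW hWpos M hM
end
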